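/- arXiv:2412.17790 — 2 statements merged into one kernel-verified Lean document; each statement's English description precedes it below -/
import Mathlib

section
/- Suppose for each k in {0, 1, ..., n} the bipartite graph Γ_k on white vertex set {0,...,n} and black vertex set {0,...,n}, with an edge (i,j) whenever N_{kj}^i ≠ 0, is a forest, and suppose Γ_0 has exactly n + 1 edges while each Γ_k for k ≥ 1 has at least one edge incident to the white vertex k and at least one edge incident to the black vertex k̄. Then the total number of edges over all Γ_k is at most (n+1)² + n², i.e. at most n² + (n+1)² where the 2-box dimension is n + 1. -/
namespace SimpleGraph

lemma IsAcyclic.ncard_edgeSet_add_one_le {V : Type*} [Finite V] [Nonempty V] {G : SimpleGraph V}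
    (hG : G.IsAcyclic) : G.edgeSet.ncard + 1 ≤ Nat.card V := by
  obtain ⟨T, hGT, -, hT⟩ := connected_top.exists_isTree_le_of_le_of_isAcyclic le_top hG
  calc G.edgeSet.ncard + 1 ≤ T.edgeSet.ncard + 1 := by
        gcongr
        exact Set.toFinite _
    _ = Nat.card V := (isTree_iff_connected_and_card.mp hT).2

end SimpleGraph

theorem stmt3_general (n : ℕ)
    (Γ : Fin (n + 1) → SimpleGraph (Fin (n + 1) ⊕ Fin (n + 1)))
    (hforest : ∀ k, (Γ k).IsAcyclic)
    (h0 : (Γ 0).edgeSet.ncard = n + 1) :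
    ∑ k, (Γ k).edgeSet.ncard ≤ (n + 1) ^ 2 + n ^ 2 := by
  have hforest_le : ∀ k, (Γ k).edgeSet.ncard ≤ 2 * n + 1 := fun k => by
    have := (hforest k).ncard_edgeSet_add_one_le
    rw [Nat.card_sum, Nat.card_eq_fintype_card, Fintype.card_fin] at this
    omega
  rw [Fin.sum_univ_succ, h0]
  calc n + 1 + ∑ i : Fin n, (Γ i.succ).edgeSet.ncard
      ≤ n + 1 + ∑ _i : Fin n, (2 * n + 1) := by gcongr; exact hforest_le _
    _ = (n + 1) ^ 2 + n ^ 2 := by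
      simp only [Finset.sum_const, Finset.card_univ, Fintype.card_fin, smul_eq_mul]
      ring

/-- If all fusion graphs `Γ_k` (bipartite graphs on white/black vertex sets
`{0,…,n}` with an edge `(i,j)` iff `N_{kj}^i ≠ 0`) are forests, `Γ_0` has
exactly `n+1` edges, and for `k ≥ 1` the graph `Γ_k` has an edge at the white
vertex `k` and an edge at the black vertex `k̄`, then the total number of edges
(= dim of the 3-box space) is at most `(n+1)² + n²`. -/
theorem stmt3 (n : ℕ) (N : Fin (n + 1) → Fin (n + 1) → Fin (n + 1) → ℝ)
    (bar : Fin (n + 1) → Fin (n + 1))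
    (Γ : Fin (n + 1) → SimpleGraph (Fin (n + 1) ⊕ Fin (n + 1)))
    (hΓ : ∀ k x y, (Γ k).Adj x y ↔ ∃ i j, N k j i ≠ 0 ∧
      ((x = Sum.inl i ∧ y = Sum.inr j) ∨ (x = Sum.inr j ∧ y = Sum.inl i)))
    (hforest : ∀ k, (Γ k).IsAcyclic)
    (h0 : (Γ 0).edgeSet.ncard = n + 1)
    (hk : ∀ k, k ≠ 0 → (∃ j, N k j k ≠ 0) ∧ (∃ i, N k (bar k) i ≠ 0)) :
    ∑ k, (Γ k).edgeSet.ncard ≤ (n + 1) ^ 2 + n ^ 2 :=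
  stmt3_general n Γ hforest h0
end

section
/- Let (B, *) be a finite set of elements closed under a convolution product p_i * p_j = Σ_k N_{ij}^k p_k with nonnegative coefficients, with unit p_0 and duality satisfying Frobenius reciprocity N_{ij}^k d_k = N_{j k̄}^{ī} d_{ī} with all d_i > 0. Define p_i ≦ p_j if p_i * p_j and p_j * p_i are both scalar multiples of p_j. Suppose L = S ⊔ R is a partition with p_0 ∈ S, R nonempty, and p_i ≦ p_k for all p_i ∈ S, p_k ∈ R, and suppose ≦ is antisymmetric on distinct elements (p_r ≦ p_{r̄} and p_{r̄} ≦ p_r cannot both hold for r ∈ R). Then the convolution is closed on S: for all p_i, p_j ∈ S, every p_k with N_{ij}^k ≠ 0 lies in S. -/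
/-!
Suppose `N i j k ≠ 0` with `i, j ∈ S` but `k ∈ R`. If `k̄ ∈ S`, then `k̄ ≦ k`, yet `p_k * p_k̄`
contains `p_0` with coefficient `d_k > 0`, forcing `k = 0 ∈ S`. If `k̄ ∈ R`, two Frobenius
rotations give `N_{k̄ i}^{j̄} ≠ 0`, and `i ≦ k̄` forces `j̄ = k̄`, i.e. `k = j ∈ S`.
-/

/-- `p_i ≦ p_j`: both `p_i * p_j` and `p_j * p_i` are scalar multiples of
`p_j`, i.e. the fusion supports are contained in `{j}`. -/
def fbLeq (n : ℕ) (N : Fin (n + 1) → Fin (n + 1) → Fin (n + 1) → ℝ)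
    (i j : Fin (n + 1)) : Prop :=
  (∀ k, N i j k ≠ 0 → k = j) ∧ (∀ k, N j i k ≠ 0 → k = j)

section FusionRules

variable {n : ℕ} {N : Fin (n + 1) → Fin (n + 1) → Fin (n + 1) → ℝ} {d : Fin (n + 1) → ℝ}
  {bar : Fin (n + 1) → Fin (n + 1)}

theorem fusion_ne_zero_rotate (hd : ∀ i, 0 < d i)
    (hfrob : ∀ i j k, N i j k * d k = N j (bar k) (bar i) * d (bar i)) {i j k : Fin (n + 1)}
    (h : N i j k ≠ 0) : N j (bar k) (bar i) ≠ 0 := by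
  intro h'
  have hk := hfrob i j k
  rw [h', zero_mul] at hk
  exact mul_ne_zero h (hd k).ne' hk

theorem fusion_ne_zero_rotate_twice (hd : ∀ i, 0 < d i) (hbar : Function.Involutive bar)
    (hfrob : ∀ i j k, N i j k * d k = N j (bar k) (bar i) * d (bar i)) {i j k : Fin (n + 1)}
    (h : N i j k ≠ 0) : N (bar k) i (bar j) ≠ 0 := by
  simpa only [hbar i] using fusion_ne_zero_rotate hd hfrob (fusion_ne_zero_rotate hd hfrob h)

theorem eq_zero_of_fbLeq_bar_self (hd : ∀ i, 0 < d i)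
    (hdual : ∀ i j, N i j 0 = if j = bar i then d i else 0) {k : Fin (n + 1)}
    (hle : fbLeq n N (bar k) k) : k = 0 :=
  (hle.2 0 (by rw [hdual, if_pos rfl]; exact (hd k).ne')).symm

theorem eq_of_fbLeq_bar_of_ne_zero (hd : ∀ i, 0 < d i) (hbar : Function.Involutive bar)
    (hfrob : ∀ i j k, N i j k * d k = N j (bar k) (bar i) * d (bar i)) {i j k : Fin (n + 1)}
    (hle : fbLeq n N i (bar k)) (h : N i j k ≠ 0) : j = k :=
  hbar.injective (hle.2 _ (fusion_ne_zero_rotate_twice hd hbar hfrob h))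

end FusionRules

theorem stmt10_general (n : ℕ) (N : Fin (n + 1) → Fin (n + 1) → Fin (n + 1) → ℝ)
    (d : Fin (n + 1) → ℝ) (bar : Fin (n + 1) → Fin (n + 1))
    (hd : ∀ i, 0 < d i)
    (hbar : Function.Involutive bar)
    (hdual : ∀ i j, N i j 0 = if j = bar i then d i else 0)
    (hfrob : ∀ i j k, N i j k * d k = N j (bar k) (bar i) * d (bar i))
    (S R : Set (Fin (n + 1)))
    (hpart : ∀ x, x ∈ S ↔ x ∉ R) (h0S : (0 : Fin (n + 1)) ∈ S)
    (hSR : ∀ i ∈ S, ∀ k ∈ R, fbLeq n N i k) :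
    ∀ i ∈ S, ∀ j ∈ S, ∀ k, N i j k ≠ 0 → k ∈ S := by
  have mem_R : ∀ x, x ∉ S → x ∈ R := fun x hx => not_not.mp (mt (hpart x).2 hx)
  intro i hi j hj k hk
  by_contra hkS
  have hkR := mem_R k hkS
  by_cases hbk : bar k ∈ S
  · exact hkS (eq_zero_of_fbLeq_bar_self hd hdual (hSR _ hbk k hkR) ▸ h0S)
  · exact hkS (eq_of_fbLeq_bar_of_ne_zero hd hbar hfrob (hSR i hi _ (mem_R _ hbk)) hk ▸ hj)

/-- If `L = S ⊔ R` with `p₀ ∈ S`, `R` nonempty, `p_i ≦ p_k` for all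
`p_i ∈ S`, `p_k ∈ R`, and `≦` is antisymmetric on distinct elements, then the
convolution is closed on `S`. -/
theorem stmt10 (n : ℕ) (N : Fin (n + 1) → Fin (n + 1) → Fin (n + 1) → ℝ)
    (d : Fin (n + 1) → ℝ) (bar : Fin (n + 1) → Fin (n + 1))
    (hN : ∀ i j k, 0 ≤ N i j k) (hd : ∀ i, 0 < d i)
    (hbar : Function.Involutive bar) (hdbar : ∀ i, d i = d (bar i))
    (hdual : ∀ i j, N i j 0 = if j = bar i then d i else 0)
    (hfrob : ∀ i j k, N i j k * d k = N j (bar k) (bar i) * d (bar i))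
    (S R : Set (Fin (n + 1)))
    (hpart : ∀ x, x ∈ S ↔ x ∉ R) (h0S : (0 : Fin (n + 1)) ∈ S)
    (hRne : R.Nonempty)
    (hSR : ∀ i ∈ S, ∀ k ∈ R, fbLeq n N i k)
    (hanti : ∀ i j, i ≠ j → ¬(fbLeq n N i j ∧ fbLeq n N j i)) :
    ∀ i ∈ S, ∀ j ∈ S, ∀ k, N i j k ≠ 0 → k ∈ S :=
  stmt10_general n N d bar hd hbar hdual hfrob S R hpart h0S hSR
end
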